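/- If G and H are finite connected graphs, then the monophonic position number of the Cartesian product satisfies mp(G □ H) ≤ max{mp(G), mp(H)}. -/

import Mathlib

open SimpleGraph

/-- A walk is *monophonic* if it is an induced path: it is a path and the only
edges of the graph between vertices of the walk are the edges of the walk. -/
def SimpleGraph.Walk.IsMonophonic {V : Type*} {G : SimpleGraph V} {u v : V}
    (p : G.Walk u v) : Prop :=
  p.IsPath ∧ ∀ a b : V, a ∈ p.support → b ∈ p.support → G.Adj a b → p.toSubgraph.Adj a b

/-- A set `S` is a *monophonic position set* if no monophonic path contains
more than two vertices of `S`. -/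
def SimpleGraph.IsMPSet {V : Type*} (G : SimpleGraph V) (S : Set V) : Prop :=
  ∀ ⦃u v : V⦄ (p : G.Walk u v), p.IsMonophonic → ({x ∈ S | x ∈ p.support}).ncard ≤ 2

/-- The *monophonic position number*: the largest cardinality of a monophonic
position set. -/
noncomputable def SimpleGraph.mpNum {V : Type*} (G : SimpleGraph V) : ℕ :=
  sSup {n | ∃ S : Set V, G.IsMPSet S ∧ S.ncard = n}

/-!
Let `M` be a monophonic position set of `G □ H`. If no two vertices of `M` lie in a common row
`G × {y}`, then `M` projects injectively to `H`, and the projection is a monophonic position set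
of `H`: three of its vertices `y₁, y₂, y₃`, in this order along an induced path `R` of `H`, lift
to a zigzag — a row at `y₁`, a copy of `R` as a column, a row at `y₃` — which is induced because
`y₁` and `y₃` are not adjacent, and which contains three vertices of `M`. Symmetrically if no two
vertices of `M` share a column. It remains to see that `M` cannot contain both two vertices
`(a, b), (a, f)` of a column and two vertices `(c, g), (e, g)` of a row. When the two pairs
overlap, a corner (a row followed by a column) through three of them is induced. Otherwise
zigzags force `{b, f, g}` and, transposing, `{a, c, e}` to be triangles, and then
`(c, g) (c, b) (a, b) (a, f)` is an induced path.
-/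

theorem Finset.exists_min'_lt_lt_max' {α : Type*} [LinearOrder α] {s : Finset α}
    (hs : s.Nonempty) (h : 2 < s.card) : ∃ j ∈ s, s.min' hs < j ∧ j < s.max' hs := by
  have := (s.erase (s.min' hs)).pred_card_le_card_erase (a := s.max' hs)
  have := s.pred_card_le_card_erase (a := s.min' hs)
  obtain ⟨j, hj⟩ := Finset.card_pos.mp
    (by omega : 0 < ((s.erase (s.min' hs)).erase (s.max' hs)).card)
  simp only [Finset.mem_erase] at hj
  exact ⟨j, hj.2.2, (s.min'_le j hj.2.2).lt_of_ne' hj.2.1, (s.le_max' j hj.2.2).lt_of_ne hj.1⟩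

namespace SimpleGraph

namespace Walk

variable {V : Type*} {G : SimpleGraph V} {u v w : V}

theorem IsPath.eq_of_mem_support_of_append {p : G.Walk u v} {q : G.Walk v w}
    (hpq : (p.append q).IsPath) {x : V} (hp : x ∈ p.support) (hq : x ∈ q.support) : x = v := by
  by_contra hxv
  exact hpq.ne_of_mem_support_of_append hxv hp hq rfl

theorem IsPath.append {p : G.Walk u v} {q : G.Walk v w} (hp : p.IsPath) (hq : q.IsPath)
    (hpq : ∀ x ∈ p.support, x ∈ q.support → x = v) : (p.append q).IsPath := by
  rw [isPath_def, support_append]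
  have hq' := (isPath_def _).mp hq
  rw [← cons_tail_support] at hq'
  refine hp.support_nodup.append hq'.of_cons fun x hxp hxq ↦ ?_
  obtain rfl := hpq x hxp (List.mem_of_mem_tail hxq)
  exact (List.nodup_cons.mp hq').1 hxq

theorem IsMonophonic.of_append_left {p : G.Walk u v} {q : G.Walk v w}
    (h : (p.append q).IsMonophonic) : p.IsMonophonic := by
  refine ⟨h.1.of_append_left, fun a b ha hb hab ↦ ?_⟩
  have hpq := h.2 a b (by simp [ha]) (by simp [hb]) hab
  rw [toSubgraph_append, Subgraph.sup_adj] at hpq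
  refine hpq.resolve_right fun hq ↦ hab.ne ?_
  rw [h.1.eq_of_mem_support_of_append ha (mem_support_of_adj_toSubgraph hq),
    h.1.eq_of_mem_support_of_append hb (mem_support_of_adj_toSubgraph hq.symm)]

theorem IsMonophonic.reverse {p : G.Walk u v} (hp : p.IsMonophonic) : p.reverse.IsMonophonic :=
  ⟨hp.1.reverse, fun a b ha hb hab ↦ by
    rw [toSubgraph_reverse]
    exact hp.2 a b (by simpa using ha) (by simpa using hb) hab⟩

theorem IsMonophonic.of_append_right {p : G.Walk u v} {q : G.Walk v w}
    (h : (p.append q).IsMonophonic) : q.IsMonophonic := by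
  have h' := h.reverse
  rw [reverse_append] at h'
  simpa using h'.of_append_left.reverse

theorem IsMonophonic.take {p : G.Walk u v} (hp : p.IsMonophonic) (n : ℕ) :
    (p.take n).IsMonophonic := by
  rw [← p.append_take_drop_eq n] at hp
  exact hp.of_append_left

theorem IsMonophonic.drop {p : G.Walk u v} (hp : p.IsMonophonic) (n : ℕ) :
    (p.drop n).IsMonophonic := by
  rw [← p.append_take_drop_eq n] at hp
  exact hp.of_append_right

theorem IsMonophonic.append {p : G.Walk u v} {q : G.Walk v w} (hp : p.IsMonophonic)
    (hq : q.IsMonophonic)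
    (hpq : ∀ a ∈ p.support, ∀ b ∈ q.support, a = b ∨ G.Adj a b → a = v ∨ b = v) :
    (p.append q).IsMonophonic := by
  refine ⟨hp.1.append hq.1 fun x hxp hxq ↦ ?_, ?_⟩
  · simpa using hpq x hxp x hxq (Or.inl rfl)
  intro a b ha hb hab
  rw [toSubgraph_append, Subgraph.sup_adj]
  rw [mem_support_append_iff] at ha hb
  rcases ha with ha | ha <;> rcases hb with hb | hb
  · exact .inl (hp.2 a b ha hb hab)
  · rcases hpq a ha b hb (.inr hab) with rfl | rfl
    · exact .inr (hq.2 _ _ q.start_mem_support hb hab)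
    · exact .inl (hp.2 _ _ ha p.end_mem_support hab)
  · rcases hpq b hb a ha (.inr hab.symm) with rfl | rfl
    · exact .inr (hq.2 _ _ ha q.start_mem_support hab)
    · exact .inl (hp.2 _ _ p.end_mem_support hb hab)
  · exact .inr (hq.2 a b ha hb hab)

theorem IsMonophonic.map {V' : Type*} {G' : SimpleGraph V'} (f : G ↪g G') {p : G.Walk u v}
    (hp : p.IsMonophonic) : (p.map f.toHom).IsMonophonic := by
  refine ⟨hp.1.map f.injective, fun a b ha hb hab ↦ ?_⟩
  simp only [support_map, List.mem_map] at ha hb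
  obtain ⟨a, ha, rfl⟩ := ha
  obtain ⟨b, hb, rfl⟩ := hb
  rw [toSubgraph_map]
  exact ⟨a, b, hp.2 a b ha hb (f.map_adj_iff.mp hab), rfl, rfl⟩

theorem isMonophonic_of_length_eq_dist (p : G.Walk u v) (hp : p.length = G.dist u v) :
    p.IsMonophonic := by
  refine ⟨p.isPath_of_length_eq_dist hp, fun a b ha hb hab ↦ ?_⟩
  obtain ⟨i, rfl, hi⟩ := mem_support_iff_exists_getVert.mp ha
  obtain ⟨j, rfl, hj⟩ := mem_support_iff_exists_getVert.mp hb
  clear ha hb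
  wlog hij : i < j generalizing i j
  · have hne : i ≠ j := fun h ↦ hab.ne (h ▸ rfl)
    exact (this j hj i hi hab.symm (by omega)).symm
  obtain rfl | hij := (Nat.succ_le_of_lt hij).eq_or_lt
  · exact p.toSubgraph_adj_getVert (by omega)
  -- a chord between positions `i` and `j > i + 1` would shortcut a shortest walk
  have := dist_le ((p.take i).append (cons hab (p.drop j)))
  simp only [length_append, take_length, length_cons, drop_length] at this
  omega

theorem isMonophonic_toWalk (h : G.Adj u v) : h.toWalk.IsMonophonic :=
  ⟨h.isPath_toWalk, fun _ _ ha hb hab ↦ adj_toSubgraph_iff_mem_edges.mpr <|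
    isChordless_iff_forall_mem_edges.mp h.isChordless_toWalk ha hb hab⟩

theorem IsMonophonic.cons {q : G.Walk v w} (hq : q.IsMonophonic) (h : G.Adj u v)
    (hu : u ∉ q.support) (hadj : ∀ x ∈ q.support, G.Adj u x → x = v) :
    (cons h q).IsMonophonic := by
  refine (isMonophonic_toWalk h).append hq fun a ha b hb hab ↦ ?_
  simp only [Adj.toWalk, support_cons, support_nil, List.mem_cons, List.not_mem_nil,
    or_false] at ha
  rcases ha with rfl | rfl
  · rcases hab with rfl | hab
    · exact absurd hb hu
    · exact .inr (hadj b hb hab)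
  · exact .inl rfl

theorem IsMonophonic.not_adj_getVert {p : G.Walk u v} (hp : p.IsMonophonic) {i k : ℕ}
    (hik : i + 2 ≤ k) (hk : k ≤ p.length) : ¬G.Adj (p.getVert i) (p.getVert k) := by
  intro hadj
  obtain ⟨t, hts, ht⟩ := p.toSubgraph_adj_iff.mp
    (hp.2 _ _ (p.getVert_mem_support i) (p.getVert_mem_support k) hadj)
  have hinj := hp.1.getVert_injOn
  rcases Sym2.eq_iff.mp hts with ⟨h₁, h₂⟩ | ⟨h₁, h₂⟩ <;>
  · have := hinj (by simp; omega) (by simp; omega) h₁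
    have := hinj (by simp; omega) (by simp; omega) h₂
    omega

theorem IsMonophonic.exists_walk_getVert {p : G.Walk u v} (hp : p.IsMonophonic) {i j k : ℕ}
    (hij : i ≤ j) (hjk : j ≤ k) :
    ∃ q : G.Walk (p.getVert i) (p.getVert k), q.IsMonophonic ∧ p.getVert j ∈ q.support := by
  have hk : (p.drop i).getVert (k - i) = p.getVert k := by
    rw [drop_getVert, Nat.add_sub_cancel' (hij.trans hjk)]
  rw [← hk]
  refine ⟨(p.drop i).take (k - i), (hp.drop i).take _, ?_⟩
  have hj : ((p.drop i).take (k - i)).getVert (j - i) = p.getVert j := by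
    rw [take_getVert, min_eq_right (by omega), drop_getVert, Nat.add_sub_cancel' hij]
  exact hj ▸ getVert_mem_support _ _

-- `a` and `c` are the first and the last vertex of `s` along `p`, and `b` is any other one.
theorem IsMonophonic.exists_between_of_two_lt_ncard {p : G.Walk u v} (hp : p.IsMonophonic)
    {s : Set V} (hs : 2 < {x ∈ s | x ∈ p.support}.ncard) :
    ∃ a ∈ s, ∃ b ∈ s, ∃ c ∈ s, a ≠ b ∧ b ≠ c ∧ a ≠ c ∧ ¬G.Adj a c ∧
      ∃ q : G.Walk a c, q.IsMonophonic ∧ b ∈ q.support := by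
  classical
  set I := (Finset.range (p.length + 1)).filter (p.getVert · ∈ s)
  have hI : 2 < I.card := by
    calc 2 < _ := hs
      _ ≤ (p.getVert '' I).ncard := Set.ncard_le_ncard ?_ (I.finite_toSet.image _)
      _ ≤ (I : Set ℕ).ncard := Set.ncard_image_le I.finite_toSet
      _ = I.card := Set.ncard_coe_finset I
    rintro x ⟨hxs, hxp⟩
    obtain ⟨n, rfl, hn⟩ := mem_support_iff_exists_getVert.mp hxp
    exact ⟨n, by simp [I, hxs]; omega, rfl⟩
  have hne : I.Nonempty := Finset.card_pos.mp (by omega)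
  obtain ⟨j, hj, hij, hjk⟩ := I.exists_min'_lt_lt_max' hne hI
  have hmem : ∀ n ∈ I, p.getVert n ∈ s ∧ n ∈ {n | n ≤ p.length} := fun n hn ↦ by
    simp only [I, Finset.mem_filter, Finset.mem_range] at hn
    exact ⟨hn.2, by simp; omega⟩
  obtain ⟨hi, hi'⟩ := hmem _ (I.min'_mem hne)
  obtain ⟨hk, hk'⟩ := hmem _ (I.max'_mem hne)
  obtain ⟨hj, hj'⟩ := hmem _ hj
  have hinj := hp.1.getVert_injOn
  refine ⟨_, hi, _, hj, _, hk, fun h ↦ hij.ne (hinj hi' hj' h), fun h ↦ hjk.ne (hinj hj' hk' h),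
    fun h ↦ (hij.trans hjk).ne (hinj hi' hk' h), hp.not_adj_getVert (by omega) hk',
    hp.exists_walk_getVert hij.le hjk.le⟩

end Walk

section MPSet

variable {V : Type*} {G : SimpleGraph V} {S : Set V}

theorem Connected.exists_isMonophonic (hG : G.Connected) (u v : V) :
    ∃ p : G.Walk u v, p.IsMonophonic :=
  have ⟨p, hp⟩ := hG.exists_walk_length_eq_dist u v
  ⟨p, p.isMonophonic_of_length_eq_dist hp⟩

theorem IsMPSet.notMem_support (hS : G.IsMPSet S) {u v : V} {p : G.Walk u v}
    (hp : p.IsMonophonic) {x y z : V} (hx : x ∈ S) (hy : y ∈ S) (hz : z ∈ S) (hxy : x ≠ y)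
    (hxz : x ≠ z) (hyz : y ≠ z) (hxp : x ∈ p.support) (hyp : y ∈ p.support) :
    z ∉ p.support := by
  intro hzp
  have hsub : ({x, y, z} : Set V) ⊆ {w ∈ S | w ∈ p.support} := by
    rintro w (rfl | rfl | rfl) <;> simp_all
  have := Set.ncard_le_ncard hsub ((p.support.finite_toSet).subset fun _ h ↦ h.2)
  rw [Set.ncard_eq_three.mpr ⟨x, y, z, hxy, hxz, hyz, rfl⟩] at this
  have := hS p hp
  omega

theorem IsMPSet.image_iso {V' : Type*} {G' : SimpleGraph V'} (f : G ≃g G') (hS : G.IsMPSet S) :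
    G'.IsMPSet (f '' S) := by
  intro u v p hp
  calc {x ∈ f '' S | x ∈ p.support}.ncard
      = (f '' {y ∈ S | y ∈ (p.map f.symm.toEmbedding.toHom).support}).ncard := by
        congr 1
        ext x
        simp only [Set.mem_ofPred_eq, Set.mem_image, Walk.support_map, List.mem_map]
        constructor
        · rintro ⟨⟨y, hy, rfl⟩, hx⟩
          exact ⟨y, ⟨hy, f y, hx, f.symm_apply_apply y⟩, rfl⟩
        · rintro ⟨_, ⟨hy, z, hz, rfl⟩, rfl⟩
          exact ⟨⟨_, hy, rfl⟩, by simpa using hz⟩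
    _ = {y ∈ S | y ∈ (p.map f.symm.toEmbedding.toHom).support}.ncard :=
        Set.ncard_image_of_injective _ f.injective
    _ ≤ 2 := hS _ (hp.map f.symm.toEmbedding)

theorem IsMPSet.ncard_le_mpNum [Finite V] (hS : G.IsMPSet S) : S.ncard ≤ G.mpNum :=
  le_csSup ⟨Nat.card V, by rintro _ ⟨T, -, rfl⟩; exact Set.ncard_le_card T⟩ ⟨S, hS, rfl⟩

theorem mpNum_le {n : ℕ} (h : ∀ S, G.IsMPSet S → S.ncard ≤ n) : G.mpNum ≤ n :=
  csSup_le ⟨0, ∅, fun _ _ _ _ ↦ by simp, Set.ncard_empty V⟩ fun _ ⟨S, hS, hn⟩ ↦ hn ▸ h S hS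

end MPSet

section BoxProd

variable {α β : Type*} {G : SimpleGraph α} {H : SimpleGraph β}

@[simp]
theorem Walk.mem_support_boxProdLeft {x x' : α} {Q : G.Walk x x'} {y : β} {z : α × β} :
    z ∈ (Q.boxProdLeft H y).support ↔ z.1 ∈ Q.support ∧ z.2 = y := by
  change z ∈ (Q.map (G.boxProdLeft H y).toHom).support ↔ _
  rw [Walk.support_map, List.mem_map]
  simp [SimpleGraph.boxProdLeft, Prod.ext_iff, and_comm, eq_comm]

@[simp]
theorem Walk.mem_support_boxProdRight {y y' : β} {R : H.Walk y y'} {x : α} {z : α × β} :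
    z ∈ (R.boxProdRight G x).support ↔ z.1 = x ∧ z.2 ∈ R.support := by
  change z ∈ (R.map (G.boxProdRight H x).toHom).support ↔ _
  rw [Walk.support_map, List.mem_map]
  simp [SimpleGraph.boxProdRight, Prod.ext_iff, and_comm, eq_comm]

theorem Walk.IsMonophonic.boxProdLeft {x x' : α} {Q : G.Walk x x'} (hQ : Q.IsMonophonic)
    (y : β) : (Q.boxProdLeft H y).IsMonophonic :=
  hQ.map (G.boxProdLeft H y)

theorem Walk.IsMonophonic.boxProdRight {y y' : β} {R : H.Walk y y'} (hR : R.IsMonophonic)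
    (x : α) : (R.boxProdRight G x).IsMonophonic :=
  hR.map (G.boxProdRight H x)

-- The row `· × {y}` and the column `{x} × ·` of `G □ H` meet, or are joined by an edge,
-- only at `(x, y)`.
theorem eq_or_eq_of_boxProd_adj_or_eq {a x : α} {b y : β}
    (h : (a, y) = (x, b) ∨ (G □ H).Adj (a, y) (x, b)) : a = x ∨ b = y := by
  rw [boxProd_adj] at h
  rcases h with h | ⟨-, h⟩ | ⟨-, h⟩
  · exact .inl (Prod.ext_iff.mp h).1
  · exact .inr h.symm
  · exact .inl h

theorem isMonophonic_boxProd_corner {x x' : α} {y y' : β} {Q : G.Walk x' x} {R : H.Walk y y'}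
    (hQ : Q.IsMonophonic) (hR : R.IsMonophonic) :
    ((Q.boxProdLeft H y).append (R.boxProdRight G x)).IsMonophonic := by
  refine (hQ.boxProdLeft y).append (hR.boxProdRight x) fun a ha b hb hab ↦ ?_
  obtain ⟨a, a'⟩ := a
  obtain ⟨b, b'⟩ := b
  simp only [Walk.mem_support_boxProdLeft, Walk.mem_support_boxProdRight] at ha hb
  obtain ⟨-, rfl⟩ := ha
  obtain ⟨rfl, -⟩ := hb
  simpa using eq_or_eq_of_boxProd_adj_or_eq hab

theorem isMonophonic_boxProd_zigzag {x₁ x x₂ : α} {y y' : β} {Q₁ : G.Walk x₁ x}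
    {R : H.Walk y y'} {Q₂ : G.Walk x x₂} (hQ₁ : Q₁.IsMonophonic) (hR : R.IsMonophonic)
    (hQ₂ : Q₂.IsMonophonic) (hyy' : y ≠ y') (hadj : ¬H.Adj y y') :
    (((Q₁.boxProdLeft H y).append (R.boxProdRight G x)).append
      (Q₂.boxProdLeft H y')).IsMonophonic := by
  refine (isMonophonic_boxProd_corner hQ₁ hR).append (hQ₂.boxProdLeft y')
    fun a ha b hb hab ↦ ?_
  obtain ⟨a, a'⟩ := a
  obtain ⟨b, b'⟩ := b
  simp only [Walk.mem_support_append_iff, Walk.mem_support_boxProdLeft,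
    Walk.mem_support_boxProdRight] at ha hb
  obtain ⟨-, rfl⟩ := hb
  rcases ha with ⟨-, rfl⟩ | ⟨rfl, -⟩
  · simp [boxProd_adj, hyy', hadj] at hab
  · simpa [or_comm] using eq_or_eq_of_boxProd_adj_or_eq (hab.imp Eq.symm Adj.symm)

namespace IsMPSet

variable {M : Set (α × β)}

theorem notMem_of_corner (hG : G.Connected) (hH : H.Connected) (hM : (G □ H).IsMPSet M)
    {x x' : α} {y y' : β} (hx : x ≠ x') (hy : y ≠ y') (h : (x, y) ∈ M) (h' : (x, y') ∈ M) :
    (x', y) ∉ M := by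
  intro h''
  obtain ⟨Q, hQ⟩ := hG.exists_isMonophonic x' x
  obtain ⟨R, hR⟩ := hH.exists_isMonophonic y y'
  refine hM.notMem_support (isMonophonic_boxProd_corner hQ hR) h'' h h' (by simp [hx.symm])
    (by simp [hx.symm]) (by simp [hy]) ?_ ?_ ?_ <;> simp

theorem notMem_of_zigzag (hG : G.Connected) (hM : (G □ H).IsMPSet M) {x₁ x₂ x₃ : α}
    {y₁ y₂ y₃ : β} {R : H.Walk y₁ y₃} (hR : R.IsMonophonic) (hy₂ : y₂ ∈ R.support)
    (hy₁₃ : y₁ ≠ y₃) (hadj : ¬H.Adj y₁ y₃) (h₁₂ : (x₁, y₁) ≠ (x₂, y₂))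
    (h₂₃ : (x₂, y₂) ≠ (x₃, y₃)) (h₁ : (x₁, y₁) ∈ M) (h₂ : (x₂, y₂) ∈ M) : (x₃, y₃) ∉ M := by
  intro h₃
  obtain ⟨Q₁, hQ₁⟩ := hG.exists_isMonophonic x₁ x₂
  obtain ⟨Q₂, hQ₂⟩ := hG.exists_isMonophonic x₂ x₃
  refine hM.notMem_support (isMonophonic_boxProd_zigzag hQ₁ hR hQ₂ hy₁₃ hadj) h₁ h₂ h₃ h₁₂
    (by simp [hy₁₃]) h₂₃ ?_ ?_ ?_ <;> simp [hy₂]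

theorem image_snd (hG : G.Connected) (hM : (G □ H).IsMPSet M) : H.IsMPSet (Prod.snd '' M) := by
  intro u v p hp
  by_contra! hs
  obtain ⟨_, ⟨⟨x₁, y₁⟩, h₁, rfl⟩, _, ⟨⟨x₂, y₂⟩, h₂, rfl⟩, _, ⟨⟨x₃, y₃⟩, h₃, rfl⟩, h₁₂, h₂₃, h₁₃,
    hadj, q, hq, hy₂⟩ := hp.exists_between_of_two_lt_ncard hs
  exact hM.notMem_of_zigzag hG hq hy₂ h₁₃ hadj (by simp [h₁₂]) (by simp [h₂₃]) h₁ h₂ h₃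

theorem swap (hM : (G □ H).IsMPSet M) : (H □ G).IsMPSet (Prod.swap '' M) :=
  hM.image_iso (boxProdComm G H)

theorem image_fst (hH : H.Connected) (hM : (G □ H).IsMPSet M) : G.IsMPSet (Prod.fst '' M) := by
  simpa [Set.image_image] using hM.swap.image_snd hH

theorem adj_of_mem_column_of_mem_row (hG : G.Connected) (hH : H.Connected)
    (hM : (G □ H).IsMPSet M) {a c e : α} {b f g : β} (hab : (a, b) ∈ M) (haf : (a, f) ∈ M)
    (hcg : (c, g) ∈ M) (heg : (e, g) ∈ M) (hbf : b ≠ f) (hce : c ≠ e) (hgb : g ≠ b)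
    (hgf : g ≠ f) : H.Adj g b ∧ H.Adj g f ∧ H.Adj b f := by
  have hrow {y : β} (hay : (a, y) ∈ M) (hgy : g ≠ y) : H.Adj g y := by
    by_contra hadj
    obtain ⟨R, hR⟩ := hH.exists_isMonophonic g y
    exact hM.notMem_of_zigzag hG hR R.start_mem_support hgy hadj (by simp [hce]) (by simp [hgy])
      hcg heg hay
  have hgb' := hrow hab hgb
  have hgf' := hrow haf hgf
  refine ⟨hgb', hgf', ?_⟩
  by_contra hadj
  have hR : (Walk.cons hgb'.symm hgf'.toWalk).IsMonophonic :=
    (Walk.isMonophonic_toWalk hgf').cons hgb'.symm (by simp [hbf, hgb.symm]) (by simp [hadj])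
  exact hM.notMem_of_zigzag hG hR (by simp) hbf hadj (by simp [hgb.symm]) (by simp [hgf]) hab
    hcg haf

theorem notMem_of_mem_column_of_mem_row (hG : G.Connected) (hH : H.Connected)
    (hM : (G □ H).IsMPSet M) {a c e : α} {b f g : β} (hab : (a, b) ∈ M) (haf : (a, f) ∈ M)
    (hcg : (c, g) ∈ M) (hbf : b ≠ f) (hce : c ≠ e) (hac : a ≠ c) (hae : a ≠ e) (hgb : g ≠ b)
    (hgf : g ≠ f) : (e, g) ∉ M := by
  intro heg
  obtain ⟨hgb', -, hbf'⟩ := hM.adj_of_mem_column_of_mem_row hG hH hab haf hcg heg hbf hce hgb hgf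
  obtain ⟨hac', -, -⟩ := hM.swap.adj_of_mem_column_of_mem_row hH hG (a := g) (c := b) (e := f)
    (b := c) (f := e) (g := a) ⟨_, hcg, rfl⟩ ⟨_, heg, rfl⟩ ⟨_, hab, rfl⟩ ⟨_, haf, rfl⟩
    hce hbf hac hae
  have e₁ : (G □ H).Adj (c, g) (c, b) := boxProd_adj_right.mpr hgb'
  have e₂ : (G □ H).Adj (c, b) (a, b) := boxProd_adj_left.mpr hac'.symm
  have e₃ : (G □ H).Adj (a, b) (a, f) := boxProd_adj_right.mpr hbf'
  have hW : (Walk.cons e₁ (Walk.cons e₂ e₃.toWalk)).IsMonophonic :=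
    ((Walk.isMonophonic_toWalk e₃).cons e₂ (by simp [hac.symm]) (by simp [hac.symm, hbf])).cons e₁
      (by simp [hac.symm, hgb, hgf]) (by simp [hac.symm, hgb, hgf])
  exact hM.notMem_support hW hcg hab haf (by simp [hgb]) (by simp [hgf]) (by simp [hbf]) (by simp)
    (by simp) (by simp)

theorem injOn_fst_or_injOn_snd (hG : G.Connected) (hH : H.Connected) (hM : (G □ H).IsMPSet M) :
    M.InjOn Prod.fst ∨ M.InjOn Prod.snd := by
  by_contra! h
  simp only [Set.InjOn, not_forall] at h
  obtain ⟨⟨⟨a, b⟩, hab, ⟨a', f⟩, haf, rfl, hbf⟩, ⟨c, g⟩, hcg, ⟨e, g'⟩, heg, rfl, hce⟩ := h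
  dsimp only at haf heg
  simp only [Prod.mk.injEq, true_and, and_true] at hbf hce
  by_cases hac : a = c
  · subst hac
    by_cases hgb : g = b
    · subst hgb
      exact hM.notMem_of_corner hG hH hce hbf hcg haf heg
    · exact hM.notMem_of_corner hG hH hce hgb hcg hab heg
  by_cases hae : a = e
  · subst hae
    by_cases hgb : g = b
    · subst hgb
      exact hM.notMem_of_corner hG hH (Ne.symm hce) hbf heg haf hcg
    · exact hM.notMem_of_corner hG hH (Ne.symm hce) hgb heg hab hcg
  by_cases hgb : g = b
  · subst hgb
    exact hM.notMem_of_corner hG hH hac hbf hab haf hcg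
  by_cases hgf : g = f
  · subst hgf
    exact hM.notMem_of_corner hG hH hac (Ne.symm hbf) haf hab hcg
  exact hM.notMem_of_mem_column_of_mem_row hG hH hab haf hcg hbf hce hac hae hgb hgf heg

end IsMPSet

end BoxProd

end SimpleGraph

/-- If `G` and `H` are finite connected graphs, then
`mp(G □ H) ≤ max {mp(G), mp(H)}`. -/
theorem mpNum_boxProd_le_max_mpNum {α β : Type*} [Fintype α] [Fintype β]
    (G : SimpleGraph α) (H : SimpleGraph β) (hG : G.Connected) (hH : H.Connected) :
    (G □ H).mpNum ≤ max G.mpNum H.mpNum := by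
  refine mpNum_le fun M hM ↦ ?_
  rcases hM.injOn_fst_or_injOn_snd hG hH with h | h
  · rw [← h.ncard_image]
    exact (hM.image_fst hH).ncard_le_mpNum.trans (le_max_left _ _)
  · rw [← h.ncard_image]
    exact (hM.image_snd hG).ncard_le_mpNum.trans (le_max_right _ _)
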